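/- arXiv:1805.09180 — 5 statements merged into one kernel-verified Lean document; each statement's English description precedes it below -/
import Mathlib

section
/- Let X₁, X₂, … be iid random vectors in ℝ^d with distribution P_X supported on S. Let Q ⊆ S be compact and standard with respect to the restriction of P_X to Q, with P_X(Q) > 0. If (h_l) is a sequence with h_l → 0 and l h_l^d / log(l) → ∞, then almost surely, for all sufficiently large l, Q is covered by the union of the balls B(X,h_l/2) over X ∈ {X₁,…,X_l} ∩ Q. -/
/-!
For `r = h_l / 4`, a volume-packing argument covers `Q` by `O(r⁻ᵈ)` closed balls of radius `r`
centred in `Q`. Standardness gives each `B(y, r) ∩ Q` probability at least `c rᵈ`, so the chance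
that some ball of the cover receives none of `X₁, …, X_l` is at most `C r⁻ᵈ exp (-c l rᵈ)`; the
rate condition `l h_lᵈ / log l → ∞` makes this `O(l⁻²)`. By Borel–Cantelli, almost surely every
ball of the cover eventually contains a sample point of `Q`, and each `x ∈ Q` is then within
`2r = h_l / 2` of that point.
-/

open Metric MeasureTheory Filter
open scoped ENNReal

/-- `S` is standard with respect to `μ` with constants `β, λ`. -/
def IsStandard {d : ℕ} (μ : Measure (EuclideanSpace ℝ (Fin d)))
    (S : Set (EuclideanSpace ℝ (Fin d))) (β lam : ℝ) : Prop :=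
  0 < lam ∧ ∀ x ∈ S, ∀ ε : ℝ, 0 < ε → ε ≤ lam →
    ENNReal.ofReal β * volume (Metric.ball x ε) ≤ μ (Metric.ball x ε ∩ S)

open Module ProbabilityTheory

lemma TotallyBounded.packingNumber_ne_top {X : Type*} [PseudoEMetricSpace X] {A : Set X}
    (hA : TotallyBounded A) {ε : NNReal} (hε : ε ≠ 0) : packingNumber ε A ≠ ⊤ := by
  obtain ⟨N, -, hN, hcover⟩ := exists_finite_isCover_of_totallyBounded (ε := ε / 2) (by simpa) hA
  refine ne_top_of_le_ne_top (Set.encard_ne_top_iff.mpr hN) ?_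
  calc packingNumber ε A = packingNumber (2 * (ε / 2)) A := by rw [mul_div_cancel₀ _ two_ne_zero]
    _ ≤ externalCoveringNumber (ε / 2) A := packingNumber_two_mul_le_externalCoveringNumber _ _
    _ ≤ N.encard := hcover.externalCoveringNumber_le_encard

section Packing

variable {E : Type*} [NormedAddCommGroup E]

lemma card_mul_measure_ball_le_of_isSeparated [MeasurableSpace E] [BorelSpace E]
    (μ : Measure E) [μ.IsAddHaarMeasure] {A : Set E} {t : Finset E} {ρ : ℝ}
    (htA : ↑t ⊆ A) (ht : IsSeparated (ENNReal.ofReal (2 * ρ)) (t : Set E)) :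
    t.card * μ (ball 0 ρ) ≤ μ (thickening ρ A) := by
  have hdisj : (t : Set E).PairwiseDisjoint (ball · ρ) := by
    intro y hy y' hy' hne
    refine Set.disjoint_left.mpr fun z hzy hzy' => (ht hy hy' hne).not_ge ?_
    rw [edist_dist]
    apply ENNReal.ofReal_le_ofReal
    linarith [dist_triangle_left y y' z, mem_ball.mp hzy, mem_ball.mp hzy']
  calc t.card * μ (ball 0 ρ) = ∑ y ∈ t, μ (ball y ρ) := by
        simp [Measure.addHaar_ball_center μ]
    _ = μ (⋃ y ∈ t, ball y ρ) := (measure_biUnion_finset hdisj fun _ _ => measurableSet_ball).symm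
    _ ≤ μ (thickening ρ A) :=
        measure_mono (Set.iUnion₂_subset fun y hy => ball_subset_thickening (htA hy) ρ)

variable [NormedSpace ℝ E] [FiniteDimensional ℝ E]

-- A maximal `r`-separated subset of `A` is an `r`-net, and the balls of radius `r / 2` around
-- its points are disjoint subsets of `thickening 1 A`.
lemma IsCompact.exists_finset_subset_iUnion_closedBall_card_mul_pow_le {A : Set E}
    (hA : IsCompact A) :
    ∃ C : ℝ, ∀ r : ℝ, 0 < r → r ≤ 1 → ∃ t : Finset E, ↑t ⊆ A ∧
      A ⊆ ⋃ y ∈ t, closedBall y r ∧ t.card * r ^ finrank ℝ E ≤ C := by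
  borelize E
  set μ : Measure E := Measure.addHaar
  set V := μ (thickening 1 A)
  set m := μ (ball 0 1)
  have hV : V ≠ ⊤ := hA.isBounded.thickening.measure_lt_top.ne
  have hm : 0 < m.toReal :=
    ENNReal.toReal_pos (measure_ball_pos μ 0 one_pos).ne' measure_ball_lt_top.ne
  refine ⟨2 ^ finrank ℝ E * V.toReal / m.toReal, fun r hr hr1 => ?_⟩
  have hfin := hA.totallyBounded.packingNumber_ne_top (ε := r.toNNReal) (by simpa using hr)
  have hsfin := Set.encard_ne_top_iff.mp ((encard_maximalSeparatedSet hfin).symm ▸ hfin)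
  set t := hsfin.toFinset
  have htA : ↑t ⊆ A := by simpa [t] using maximalSeparatedSet_subset
  have hsep : IsSeparated (ENNReal.ofReal (2 * (r / 2))) (t : Set E) := by
    rw [mul_div_cancel₀ _ two_ne_zero, Set.Finite.coe_toFinset]
    exact isSeparated_maximalSeparatedSet
  refine ⟨t, htA, ?_, ?_⟩
  · simpa [t, closedEBall_coe, hr.le] using
      isCover_iff_subset_iUnion_closedEBall.mp (isCover_maximalSeparatedSet hfin)
  · have hvol := (card_mul_measure_ball_le_of_isSeparated μ htA hsep).trans
      (measure_mono (thickening_mono (by linarith : r / 2 ≤ 1) A))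
    rw [Measure.addHaar_ball_of_pos μ _ (by positivity)] at hvol
    have hvol' := ENNReal.toReal_mono hV hvol
    rw [ENNReal.toReal_mul, ENNReal.toReal_mul, ENNReal.toReal_natCast,
      ENNReal.toReal_ofReal (by positivity)] at hvol'
    rw [le_div_iff₀ hm]
    calc (t.card : ℝ) * r ^ finrank ℝ E * m.toReal
        = 2 ^ finrank ℝ E * (t.card * ((r / 2) ^ finrank ℝ E * m.toReal)) := by
          rw [div_pow]; field_simp
      _ ≤ 2 ^ finrank ℝ E * V.toReal := by gcongr

end Packing

lemma subset_iUnion_ball_two_mul_of_forall_exists_mem {E ι : Type*} [PseudoMetricSpace E]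
    {Q : Set E} {t : Finset E} {r : ℝ} (hcover : Q ⊆ ⋃ y ∈ t, closedBall y r)
    {s : Finset ι} {z : ι → E} (hz : ∀ y ∈ t, ∃ i ∈ s, z i ∈ ball y r ∩ Q) :
    Q ⊆ ⋃ i ∈ s, ⋃ (_ : z i ∈ Q), ball (z i) (2 * r) := by
  intro x hx
  obtain ⟨y, hy, hxy⟩ := Set.mem_iUnion₂.mp (hcover hx)
  obtain ⟨i, hi, hzy, hzQ⟩ := hz y hy
  refine Set.mem_iUnion₂.mpr ⟨i, hi, Set.mem_iUnion.mpr ⟨hzQ, ?_⟩⟩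
  rw [mem_ball]
  linarith [mem_closedBall.mp hxy, mem_ball'.mp hzy, dist_triangle x y (z i)]

lemma ENNReal.one_sub_pow_le_ofReal_exp {p : ℝ≥0∞} {a : ℝ} (hap : ENNReal.ofReal a ≤ p) (n : ℕ) :
    (1 - p) ^ n ≤ ENNReal.ofReal (Real.exp (-(n * a))) := by
  have h1 : 1 - p ≤ ENNReal.ofReal (Real.exp (-a)) := by
    refine tsub_le_iff_right.mpr (le_trans ?_ (add_le_add le_rfl hap))
    calc (1 : ℝ≥0∞) = ENNReal.ofReal 1 := ENNReal.ofReal_one.symm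
      _ ≤ ENNReal.ofReal (Real.exp (-a) + a) :=
          ENNReal.ofReal_le_ofReal (by linarith [Real.add_one_le_exp (-a)])
      _ ≤ _ := ENNReal.ofReal_add_le
  calc (1 - p) ^ n ≤ ENNReal.ofReal (Real.exp (-a)) ^ n := pow_le_pow_left' h1 n
    _ = ENNReal.ofReal (Real.exp (-(n * a))) := by
      rw [← ENNReal.ofReal_pow (Real.exp_nonneg _), ← Real.exp_nat_mul, mul_neg]

section Sampling

variable {Ω E ι : Type*} [MeasurableSpace Ω] {μ : Measure Ω} [IsProbabilityMeasure μ]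
  [MeasurableSpace E] {X : ι → Ω → E} {P : Measure E}

lemma ProbabilityTheory.iIndepFun.measure_iInter_preimage_compl (hX : ∀ i, Measurable (X i))
    (hiid : iIndepFun X μ) (hdist : ∀ i, μ.map (X i) = P) {B : Set E} (hB : MeasurableSet B)
    (s : Finset ι) : μ (⋂ i ∈ s, X i ⁻¹' Bᶜ) = (1 - P B) ^ s.card := by
  have hmiss : ∀ i, μ (X i ⁻¹' Bᶜ) = 1 - P B := fun i => by
    rw [Set.preimage_compl, prob_compl_eq_one_sub (hX i hB), ← hdist i,
      Measure.map_apply (hX i) hB]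
  rw [hiid.meas_biInter fun i _ => ⟨Bᶜ, hB.compl, rfl⟩, Finset.prod_congr rfl fun i _ => hmiss i,
    Finset.prod_const]

lemma ProbabilityTheory.iIndepFun.measure_not_subset_iUnion_ball_le [PseudoMetricSpace E]
    [OpensMeasurableSpace E] (hX : ∀ i, Measurable (X i)) (hiid : iIndepFun X μ)
    (hdist : ∀ i, μ.map (X i) = P) {Q : Set E} (hQ : MeasurableSet Q) {t : Finset E} {r : ℝ}
    (hcover : Q ⊆ ⋃ y ∈ t, closedBall y r) {a : ℝ}
    (hP : ∀ y ∈ t, ENNReal.ofReal a ≤ P (ball y r ∩ Q)) (s : Finset ι) :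
    μ {ω | ¬ Q ⊆ ⋃ i ∈ s, ⋃ (_ : X i ω ∈ Q), ball (X i ω) (2 * r)} ≤
      t.card * ENNReal.ofReal (Real.exp (-(s.card * a))) := by
  have hsub : {ω | ¬ Q ⊆ ⋃ i ∈ s, ⋃ (_ : X i ω ∈ Q), ball (X i ω) (2 * r)} ⊆
      ⋃ y ∈ t, ⋂ i ∈ s, X i ⁻¹' (ball y r ∩ Q)ᶜ := by
    intro ω hω
    by_contra hmiss
    simp only [Set.mem_iUnion, Set.mem_iInter, Set.mem_preimage, Set.mem_compl_iff, not_exists,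
      not_forall, not_not] at hmiss
    exact hω (subset_iUnion_ball_two_mul_of_forall_exists_mem hcover fun y hy =>
      (hmiss y hy).imp fun i hi => ⟨hi.1, hi.2⟩)
  calc _ ≤ ∑ y ∈ t, μ (⋂ i ∈ s, X i ⁻¹' (ball y r ∩ Q)ᶜ) :=
        (measure_mono hsub).trans (measure_biUnion_finset_le _ _)
    _ ≤ ∑ _y ∈ t, ENNReal.ofReal (Real.exp (-(s.card * a))) := by
        refine Finset.sum_le_sum fun y hy => ?_
        rw [hiid.measure_iInter_preimage_compl hX hdist (measurableSet_ball.inter hQ)]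
        exact ENNReal.one_sub_pow_le_ofReal_exp (hP y hy) _
    _ = _ := by rw [Finset.sum_const, nsmul_eq_mul]

end Sampling

lemma ProbabilityTheory.iIndepFun.measure_not_subset_iUnion_ball_le_of_card_mul_pow_le
    {Ω E : Type*} [MeasurableSpace Ω] {μ : Measure Ω} [IsProbabilityMeasure μ]
    [PseudoMetricSpace E] [MeasurableSpace E] [OpensMeasurableSpace E] {X : ℕ → Ω → E}
    {P : Measure E} (hX : ∀ i, Measurable (X i)) (hiid : iIndepFun X μ)
    (hdist : ∀ i, μ.map (X i) = P) {Q : Set E} (hQ : MeasurableSet Q) {t : Finset E}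
    {d : ℕ} {r c C : ℝ} (hr : 0 < r) (hc : 0 < c) (hcover : Q ⊆ ⋃ y ∈ t, closedBall y r)
    (hcard : t.card * r ^ d ≤ C) (hP : ∀ y ∈ t, ENNReal.ofReal (c * r ^ d) ≤ P (ball y r ∩ Q))
    (l : ℕ) :
    μ {ω | ¬ Q ⊆ ⋃ i ∈ Finset.range l, ⋃ (_ : X i ω ∈ Q), ball (X i ω) (2 * r)} ≤
      ENNReal.ofReal (C * c * ((c * r ^ d)⁻¹ * Real.exp (-(l * (c * r ^ d))))) := by
  have hbound := hiid.measure_not_subset_iUnion_ball_le hX hdist hQ hcover hP (Finset.range l)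
  rw [Finset.card_range, ← ENNReal.ofReal_natCast, ← ENNReal.ofReal_mul (by positivity)] at hbound
  refine hbound.trans (ENNReal.ofReal_le_ofReal ?_)
  have hrd : 0 < r ^ d := by positivity
  calc (t.card : ℝ) * Real.exp (-(l * (c * r ^ d)))
      ≤ C / r ^ d * Real.exp (-(l * (c * r ^ d))) := by
        gcongr
        exact (le_div_iff₀ hrd).mpr hcard
    _ = C * c * ((c * r ^ d)⁻¹ * Real.exp (-(l * (c * r ^ d)))) := by field_simp

lemma IsStandard.exists_pos_ofReal_mul_pow_le_measure_ball_inter {d : ℕ}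
    {P : Measure (EuclideanSpace ℝ (Fin d))} {Q : Set (EuclideanSpace ℝ (Fin d))} {β lam : ℝ}
    (hstd : IsStandard ((P Q)⁻¹ • P.restrict Q) Q β lam) (hQ : MeasurableSet Q)
    (hQ0 : P Q ≠ 0) (hQtop : P Q ≠ ⊤) (hβ : 0 < β) :
    ∃ c > 0, ∀ y ∈ Q, ∀ r, 0 < r → r ≤ lam → ENNReal.ofReal (c * r ^ d) ≤ P (ball y r ∩ Q) := by
  set m := volume (ball (0 : EuclideanSpace ℝ (Fin d)) 1)
  have hm : m ≠ ⊤ := measure_ball_lt_top.ne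
  refine ⟨(P Q).toReal * β * m.toReal, ?_, fun y hy r hr hrlam => ?_⟩
  · have := ENNReal.toReal_pos hQ0 hQtop
    have := ENNReal.toReal_pos (measure_ball_pos volume _ one_pos).ne' hm
    positivity
  have h := hstd.2 y hy r hr hrlam
  rw [Measure.smul_apply, smul_eq_mul, Measure.restrict_apply (measurableSet_ball.inter hQ),
    Set.inter_assoc, Set.inter_self, Measure.addHaar_ball_of_pos _ _ hr,
    finrank_euclideanSpace_fin] at h
  calc ENNReal.ofReal ((P Q).toReal * β * m.toReal * r ^ d)
      = P Q * (ENNReal.ofReal β * (ENNReal.ofReal (r ^ d) * m)) := by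
        rw [ENNReal.ofReal_mul (by positivity), ENNReal.ofReal_mul (by positivity),
          ENNReal.ofReal_mul ENNReal.toReal_nonneg, ENNReal.ofReal_toReal hQtop,
          ENNReal.ofReal_toReal hm]
        ring
    _ ≤ P Q * ((P Q)⁻¹ * P (ball y r ∩ Q)) := by gcongr
    _ = P (ball y r ∩ Q) := by rw [← mul_assoc, ENNReal.mul_inv_cancel hQ0 hQtop, one_mul]

lemma summable_inv_mul_exp_neg_mul {s : ℕ → ℝ}
    (hs : Tendsto (fun n : ℕ => n * s n / Real.log n) atTop atTop) :
    Summable fun n : ℕ => (s n)⁻¹ * Real.exp (-(n * s n)) := by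
  refine Summable.of_norm_bounded_eventually_nat (Real.summable_one_div_nat_pow.mpr one_lt_two) ?_
  filter_upwards [hs.eventually_ge_atTop 3, eventually_ge_atTop 3] with n hrate hn
  have hn3 : (3 : ℝ) ≤ n := by exact_mod_cast hn
  have hlog : 1 ≤ Real.log n := by
    rw [Real.le_log_iff_exp_le (by linarith)]
    linarith [Real.exp_one_lt_d9]
  have hns : 3 * Real.log n ≤ n * s n := by rwa [le_div_iff₀ (by linarith)] at hrate
  have hs_pos : 0 < s n := by nlinarith
  have hinv : (s n)⁻¹ ≤ n := by
    rw [inv_le_iff_one_le_mul₀ hs_pos]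
    linarith
  have hexp : Real.exp (-(n * s n)) ≤ ((n : ℝ) ^ 3)⁻¹ := by
    calc Real.exp (-(n * s n)) ≤ Real.exp (-(3 * Real.log n)) := Real.exp_le_exp.mpr (by linarith)
      _ = ((n : ℝ) ^ 3)⁻¹ := by
        rw [Real.exp_neg, ← Real.exp_log (by positivity : (0 : ℝ) < n ^ 3), Real.log_pow]
        norm_num
  rw [Real.norm_of_nonneg (by positivity)]
  calc (s n)⁻¹ * Real.exp (-(n * s n)) ≤ n * ((n : ℝ) ^ 3)⁻¹ :=
        mul_le_mul hinv hexp (by positivity) (by positivity)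
    _ = 1 / (n : ℝ) ^ 2 := by field_simp

lemma ae_eventually_notMem_of_eventually_le_ofReal {Ω : Type*} [MeasurableSpace Ω]
    {μ : Measure Ω} {s : ℕ → Set Ω} {f : ℕ → ℝ} (hf : Summable f)
    (hs : ∀ᶠ n in atTop, μ (s n) ≤ ENNReal.ofReal (f n)) :
    ∀ᵐ ω ∂μ, ∀ᶠ n in atTop, ω ∉ s n := by
  obtain ⟨N, hN⟩ := eventually_atTop.mp hs
  -- Discarding the first `N` events makes the bound hold for every `n`.
  have hsum : ∑' n, μ (if N ≤ n then s n else ∅) ≠ ⊤ := by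
    refine ne_top_of_le_ne_top hf.tsum_ofReal_ne_top (ENNReal.tsum_le_tsum fun n => ?_)
    split_ifs with hn
    · exact hN n hn
    · simp
  filter_upwards [ae_eventually_notMem hsum] with ω hω
  filter_upwards [hω, eventually_ge_atTop N] with n hn hNn
  simpa [hNn] using hn

theorem covering_lemma_general {d : ℕ} {Ω : Type*} [MeasurableSpace Ω]
    (μ : Measure Ω) [IsProbabilityMeasure μ]
    (X : ℕ → Ω → EuclideanSpace ℝ (Fin d)) (hX : ∀ i, Measurable (X i))
    (PX : Measure (EuclideanSpace ℝ (Fin d)))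
    (hiid : ProbabilityTheory.iIndepFun X μ)
    (hdist : ∀ i, Measure.map (X i) μ = PX)
    (Q : Set (EuclideanSpace ℝ (Fin d)))
    (hQcomp : IsCompact Q)
    (hQpos : 0 < PX Q)
    (β lam : ℝ) (hβ : 0 < β)
    (hstd : IsStandard ((PX Q)⁻¹ • PX.restrict Q) Q β lam)
    (h : ℕ → ℝ) (hpos : ∀ l, 0 < h l)
    (h0 : Tendsto h atTop (nhds 0))
    (hrate : Tendsto (fun l : ℕ => (l : ℝ) * (h l) ^ d / Real.log l) atTop atTop) :
    ∀ᵐ ω ∂μ, ∃ L : ℕ, ∀ l ≥ L,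
      Q ⊆ ⋃ i ∈ Finset.range l, ⋃ (_ : X i ω ∈ Q), Metric.ball (X i ω) (h l / 2) := by
  have hQ := hQcomp.isClosed.measurableSet
  have hPQ : PX Q ≠ ⊤ := hdist 0 ▸ measure_ne_top _ _
  obtain ⟨C, hC⟩ := hQcomp.exists_finset_subset_iUnion_closedBall_card_mul_pow_le
  rw [finrank_euclideanSpace_fin] at hC
  obtain ⟨c, hc, hsmall⟩ :=
    hstd.exists_pos_ofReal_mul_pow_le_measure_ball_inter hQ hQpos.ne' hPQ hβ
  set s : ℕ → ℝ := fun l => c * (h l / 4) ^ d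
  have hs : Tendsto (fun l : ℕ => l * s l / Real.log l) atTop atTop := by
    convert hrate.const_mul_atTop (by positivity : 0 < c / 4 ^ d) using 2 with l
    simp only [s, div_pow]
    ring
  refine (ae_eventually_notMem_of_eventually_le_ofReal (s := fun l => {ω | ¬ Q ⊆
      ⋃ i ∈ Finset.range l, ⋃ (_ : X i ω ∈ Q), ball (X i ω) (h l / 2)})
    ((summable_inv_mul_exp_neg_mul hs).mul_left (C * c)) ?_).mono fun ω hω => ?_
  · filter_upwards [h0.eventually (eventually_le_nhds
      (lt_min four_pos (by linarith [hstd.1]) : (0 : ℝ) < min 4 (4 * lam)))] with l hl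
    have hr : 0 < h l / 4 := by linarith [hpos l]
    obtain ⟨t, htQ, hcover, hcard⟩ := hC (h l / 4) hr (by linarith [min_le_left 4 (4 * lam)])
    rw [show h l / 2 = 2 * (h l / 4) by ring]
    exact hiid.measure_not_subset_iUnion_ball_le_of_card_mul_pow_le hX hdist hQ hr hc hcover hcard
      (fun y hy => hsmall y (htQ hy) _ hr (by linarith [min_le_right 4 (4 * lam)])) l
  · obtain ⟨L, hL⟩ := eventually_atTop.mp hω
    exact ⟨L, fun l hl => by simpa using hL l hl⟩

/-- Lemma 4: for iid `X₁,X₂,…` with distribution `P_X` supported on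
`S`, if `Q ⊆ S` is compact, has positive probability, and is standard with
respect to the normalized restriction of `P_X` to `Q`, and the bandwidths satisfy
`h_l → 0`, `l h_l^d / log l → ∞`, then a.s. for all large `l`,
`Q ⊆ ⋃_{X ∈ {X₁,…,X_l} ∩ Q} B(X, h_l/2)`. -/
theorem covering_lemma {d : ℕ} {Ω : Type*} [MeasurableSpace Ω]
    (μ : Measure Ω) [IsProbabilityMeasure μ]
    (X : ℕ → Ω → EuclideanSpace ℝ (Fin d)) (hX : ∀ i, Measurable (X i))
    (PX : Measure (EuclideanSpace ℝ (Fin d)))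
    (hiid : ProbabilityTheory.iIndepFun X μ)
    (hdist : ∀ i, Measure.map (X i) μ = PX)
    (S Q : Set (EuclideanSpace ℝ (Fin d)))
    (hsupp : PX Sᶜ = 0) (hQS : Q ⊆ S) (hQcomp : IsCompact Q)
    (hQpos : 0 < PX Q)
    (β lam : ℝ) (hβ : 0 < β)
    (hstd : IsStandard ((PX Q)⁻¹ • PX.restrict Q) Q β lam)
    (h : ℕ → ℝ) (hpos : ∀ l, 0 < h l)
    (h0 : Tendsto h atTop (nhds 0))
    (hrate : Tendsto (fun l : ℕ => (l : ℝ) * (h l) ^ d / Real.log l) atTop atTop) :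
    ∀ᵐ ω ∂μ, ∃ L : ℕ, ∀ l ≥ L,
      Q ⊆ ⋃ i ∈ Finset.range l, ⋃ (_ : X i ω ∈ Q), Metric.ball (X i ω) (h l / 2) :=
  covering_lemma_general μ X hX PX hiid hdist Q hQcomp hQpos β lam hβ hstd h hpos h0 hrate
end

section
/- Let Z₁, Z₂, … be iid observations in ℝ^d with distribution P_Z whose support Q is compact, connected, and standard with respect to P_Z with constant β. If ε_l = C (log(l)/l)^{1/d} with C > (2/(β ω_d))^{1/d}, then almost surely, for l large enough, Q ⊆ ∪_{i=1}^l B(Zᵢ, ε_l), and consequently the union ∪_{i=1}^l B(Zᵢ, ε_l) is a connected set. -/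
open Metric MeasureTheory Filter
open scoped ENNReal

/-!
Pick `C' ∈ ((2 / (β ω_d))^{1/d}, C)` and put `u_l = (log l / l)^{1/d}`. A maximal
`(C - C') u_l`-separated subset `F_l` of `Q` is a net of `Q`, and comparing volumes of disjoint
balls gives `#F_l = O(l / log l)`. By standardness each ball `B(y, C' u_l)`, `y ∈ F_l`, has mass at
least `a log l / l` with `a = β ω_d C'^d > 2`, so the probability that it contains none of
`Z₀, …, Z_{l-1}` is at most `l^{-a}`. The union bound over `F_l` gives `O(l^{1-a})`, which is
summable, so by Borel–Cantelli almost surely, for all large `l`, every such ball contains a sample,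
and then the balls `B(Zᵢ, C u_l)` cover `Q`. Since almost surely every `Zᵢ` lies in `Q`, each of
these balls meets the connected set `Q` that they cover, so their union is connected.
-/

open Real Finset ProbabilityTheory Module
open scoped NNReal Topology

theorem IsConnected.biUnion_of_subset {X ι : Type*} [TopologicalSpace X] {Q : Set X}
    (hQ : IsConnected Q) {s : Set ι} {U : ι → Set X} (hU : ∀ i ∈ s, IsPreconnected (U i))
    (hmeet : ∀ i ∈ s, (Q ∩ U i).Nonempty) (hQU : Q ⊆ ⋃ i ∈ s, U i) :
    IsConnected (⋃ i ∈ s, U i) := by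
  obtain ⟨q, hq⟩ := hQ.nonempty
  refine ⟨⟨q, hQU hq⟩, isPreconnected_of_forall q fun y hy => ?_⟩
  obtain ⟨i, hi, hyi⟩ := Set.mem_iUnion₂.1 hy
  obtain ⟨x, hxQ, hxU⟩ := hmeet i hi
  exact ⟨Q ∪ U i, Set.union_subset hQU (Set.subset_biUnion_of_mem hi), Or.inl hq, Or.inr hyi,
    hQ.isPreconnected.union x hxQ hxU (hU i hi)⟩

theorem IsConnected.biUnion_ball_of_subset {E ι : Type*} [NormedAddCommGroup E]
    [NormedSpace ℝ E] {Q : Set E} (hQ : IsConnected Q) {s : Set ι} {c : ι → E} {r : ℝ}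
    (hc : ∀ i ∈ s, c i ∈ Q) (hQU : Q ⊆ ⋃ i ∈ s, ball (c i) r) :
    IsConnected (⋃ i ∈ s, ball (c i) r) := by
  obtain ⟨q, hq⟩ := hQ.nonempty
  obtain ⟨j, -, hqj⟩ := Set.mem_iUnion₂.1 (hQU hq)
  have hr : 0 < r := pos_of_mem_ball hqj
  exact hQ.biUnion_of_subset (fun i _ => (convex_ball _ _).isPreconnected)
    (fun i hi => ⟨c i, hc i hi, mem_ball_self hr⟩) hQU

section Packing

variable {E : Type*} [NormedAddCommGroup E] [NormedSpace ℝ E] [FiniteDimensional ℝ E]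

theorem Metric.IsSeparated.card_mul_pow_le_of_subset_ball {F : Finset E} {s : ℝ≥0}
    (hs : 0 < s) (hF : IsSeparated s (F : Set E)) {x : E} {R : ℝ} (hR : 0 ≤ R)
    (hFR : ↑F ⊆ ball x R) :
    (F.card : ℝ) * s ^ finrank ℝ E ≤ (2 * R + s) ^ finrank ℝ E := by
  let := borel E
  have : BorelSpace E := ⟨rfl⟩
  set μ : Measure E := Measure.addHaar
  have hs2 : (0 : ℝ) < s / 2 := by positivity
  have hdisj : (F : Set E).PairwiseDisjoint fun y => ball y (s / 2) := fun y hy z hz hyz =>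
    ball_disjoint_ball <| by
      have : (s : ℝ≥0∞) < edist y z := hF hy hz hyz
      rw [edist_nndist, ENNReal.coe_lt_coe, ← NNReal.coe_lt_coe, coe_nndist] at this
      linarith
  have hvol : ∑ y ∈ F, μ (ball y (s / 2)) ≤ μ (ball x (R + s / 2)) := by
    rw [← measure_biUnion_finset hdisj fun _ _ => measurableSet_ball]
    exact measure_mono <| Set.iUnion₂_subset fun y hy =>
      ball_subset_ball' (by linarith [mem_ball.1 (hFR hy)])
  rw [sum_congr rfl fun y _ => Measure.addHaar_ball_of_pos μ y hs2,
    Measure.addHaar_ball_of_pos μ _ (by positivity : 0 < R + s / 2), sum_const, nsmul_eq_mul,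
    ← mul_assoc, ENNReal.mul_le_mul_iff_left (measure_ball_pos μ 0 one_pos).ne'
      measure_ball_lt_top.ne, ← ENNReal.ofReal_natCast,
    ← ENNReal.ofReal_mul (Nat.cast_nonneg _), ENNReal.ofReal_le_ofReal_iff (by positivity)] at hvol
  calc (F.card : ℝ) * s ^ finrank ℝ E
      = 2 ^ finrank ℝ E * (F.card * (s / 2) ^ finrank ℝ E) := by rw [div_pow]; field_simp
    _ ≤ 2 ^ finrank ℝ E * (R + s / 2) ^ finrank ℝ E := by gcongr
    _ = (2 * R + s) ^ finrank ℝ E := by rw [← mul_pow]; ring_nf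

theorem exists_finset_subset_iUnion_closedBall_card_mul_pow_le {A : Set E} {x : E} {R : ℝ}
    (hR : 0 ≤ R) (hA : A ⊆ ball x R) {s : ℝ} (hs : 0 < s) :
    ∃ F : Finset E, ↑F ⊆ A ∧ A ⊆ ⋃ y ∈ F, closedBall y s ∧
      (F.card : ℝ) * s ^ finrank ℝ E ≤ (2 * R + s) ^ finrank ℝ E := by
  lift s to ℝ≥0 using hs.le
  obtain ⟨N, -, hNfin, hN⟩ := exists_finite_isCover_of_isCompact_closure (ε := s / 2)
    (half_pos (mod_cast hs)).ne' (isBounded_ball.subset hA).isCompact_closure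
  have hpack : packingNumber s A ≠ ⊤ := by
    refine ne_top_of_le_ne_top hNfin.encard_lt_top.ne ?_
    calc packingNumber s A = packingNumber (2 * (s / 2)) A := by
          rw [mul_div_cancel₀ _ two_ne_zero]
      _ ≤ externalCoveringNumber (s / 2) A := packingNumber_two_mul_le_externalCoveringNumber _ _
      _ ≤ N.encard := hN.externalCoveringNumber_le_encard
  have hfin : (maximalSeparatedSet s A).Finite := by
    rw [← Set.encard_ne_top_iff, encard_maximalSeparatedSet hpack]
    exact hpack
  refine ⟨hfin.toFinset, by simpa using maximalSeparatedSet_subset, ?_, ?_⟩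
  · simpa using (isCover_maximalSeparatedSet hpack).subset_iUnion_closedBall
  · exact IsSeparated.card_mul_pow_le_of_subset_ball (mod_cast hs)
      (by simpa using isSeparated_maximalSeparatedSet) hR
      (by simpa using maximalSeparatedSet_subset.trans hA)

end Packing

theorem lt_mul_pow_of_div_rpow_lt {d : ℕ} (hd : 0 < d) {x b c : ℝ} (hx : 0 ≤ x) (hb : 0 < b)
    (h : (x / b) ^ ((1 : ℝ) / d) < c) : x < b * c ^ d := by
  have hc : 0 < c := (rpow_nonneg (by positivity) _).trans_lt h
  rwa [one_div, rpow_inv_lt_iff_of_pos (by positivity) hc.le (by positivity),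
    div_lt_iff₀ hb, rpow_natCast, mul_comm] at h

theorem tendsto_log_div_self_rpow_nhds_zero {d : ℕ} (hd : 0 < d) :
    Tendsto (fun l : ℕ => (log l / l) ^ ((1 : ℝ) / d)) atTop (𝓝 0) := by
  have hlog : Tendsto (fun l : ℕ => log l / l) atTop (𝓝 0) := by
    have := tendsto_pow_log_div_mul_add_atTop 1 0 1 one_ne_zero
    simp only [pow_one, one_mul, add_zero] at this
    exact this.comp tendsto_natCast_atTop_atTop
  have := hlog.rpow_const (p := (1 : ℝ) / d) (Or.inr (by positivity))
  rwa [zero_rpow (by positivity)] at this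

theorem log_div_self_rpow_pow {d : ℕ} (hd : d ≠ 0) (l : ℕ) :
    ((log l / l) ^ ((1 : ℝ) / d)) ^ d = log l / l := by
  rw [one_div, rpow_inv_natCast_pow (div_nonneg (log_natCast_nonneg l) l.cast_nonneg) hd]

theorem eventually_log_div_self_pos : ∀ᶠ l : ℕ in atTop, 0 < log l / l := by
  filter_upwards [eventually_ge_atTop 2] with l hl
  have hl : (2 : ℝ) ≤ l := by exact_mod_cast hl
  exact div_pos (log_pos (by linarith)) (by linarith)

theorem summable_mul_exp_neg_mul_log_div_self {a K : ℝ} (ha : 2 < a) {N : ℕ → ℝ}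
    (hN0 : ∀ l, 0 ≤ N l) (hN : ∀ᶠ l in atTop, N l * (log l / l) ≤ K) :
    Summable fun l : ℕ => N l * exp (-(l * (a * (log l / l)))) := by
  refine ((summable_nat_rpow.2 (by linarith : 1 - a < -1)).mul_left |K|
    ).of_norm_bounded_eventually_nat ?_
  filter_upwards [eventually_ge_atTop 3, hN] with l hl hNl
  have hl : (3 : ℝ) ≤ l := by exact_mod_cast hl
  have hlog : 1 ≤ log l := by
    rw [le_log_iff_exp_le (by linarith)]
    linarith [exp_one_lt_d9]
  have hNl' : N l ≤ |K| * l := calc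
    N l ≤ N l * log l := le_mul_of_one_le_right (hN0 l) hlog
    _ = N l * (log l / l) * l := by field_simp
    _ ≤ |K| * l := by gcongr; exact hNl.trans (le_abs_self K)
  have hexp : exp (-(l * (a * (log l / l)))) = l ^ (-a) := by
    rw [rpow_def_of_pos (by linarith)]
    congr 1
    field_simp
  rw [Real.norm_of_nonneg (mul_nonneg (hN0 l) (exp_pos _).le), hexp, sub_eq_add_neg,
    rpow_add (by linarith), rpow_one, ← mul_assoc]
  gcongr

theorem exists_finset_nets_card_mul_log_div_self_le {E : Type*} [NormedAddCommGroup E]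
    [NormedSpace ℝ E] [FiniteDimensional ℝ E] (hd : 0 < finrank ℝ E) {Q : Set E}
    (hQ : Bornology.IsBounded Q) {c : ℝ} (hc : 0 < c) :
    ∃ (F : ℕ → Finset E) (K : ℝ), (∀ᶠ l in atTop, ↑(F l) ⊆ Q ∧
        Q ⊆ ⋃ y ∈ F l, closedBall y (c * (log l / l) ^ ((1 : ℝ) / finrank ℝ E))) ∧
      ∀ᶠ l in atTop, ((F l).card : ℝ) * (log l / l) ≤ K := by
  set d := finrank ℝ E
  obtain ⟨R, hR, hQR⟩ := hQ.subset_ball_lt 0 0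
  choose! F hFQ hQF hFcard using fun s (hs : 0 < s) =>
    exists_finset_subset_iUnion_closedBall_card_mul_pow_le hR.le hQR hs
  set u : ℕ → ℝ := fun l => (log l / l) ^ ((1 : ℝ) / d)
  have hupos : ∀ᶠ l in atTop, 0 < c * u l := eventually_log_div_self_pos.mono fun l hl =>
    mul_pos hc (rpow_pos_of_pos hl _)
  have hsmall : ∀ᶠ l in atTop, c * u l ≤ 1 :=
    ((tendsto_log_div_self_rpow_nhds_zero hd).const_mul c).eventually_le_const (by simp)
  refine ⟨fun l => F (c * u l), (2 * R + 1) ^ d / c ^ d, ?_, ?_⟩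
  · filter_upwards [hupos] with l hl using ⟨hFQ _ hl, hQF _ hl⟩
  · filter_upwards [hupos, hsmall] with l hl hsmall
    rw [le_div_iff₀ (by positivity)]
    calc _ = ((F _).card : ℝ) * (c * u l) ^ d := by
          rw [mul_pow, log_div_self_rpow_pow hd.ne']; ring
      _ ≤ (2 * R + c * u l) ^ d := hFcard _ hl
      _ ≤ (2 * R + 1) ^ d := by gcongr

section IID

variable {Ω α : Type*} [MeasurableSpace Ω] {μ : Measure Ω} [IsProbabilityMeasure μ]
  [MeasurableSpace α] {Z : ℕ → Ω → α} {P : Measure α}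

theorem measureReal_forall_notMem_le_exp (hZ : ∀ i, Measurable (Z i)) (hiid : iIndepFun Z μ)
    (hdist : ∀ i, μ.map (Z i) = P) {A : Set α} (hA : MeasurableSet A) (l : ℕ) :
    μ.real {ω | ∀ i ∈ range l, Z i ω ∉ A} ≤ exp (-(l * P.real A)) := by
  have : IsProbabilityMeasure P := hdist 0 ▸ Measure.isProbabilityMeasure_map (hZ 0).aemeasurable
  have hset : {ω | ∀ i ∈ range l, Z i ω ∉ A} = ⋂ i ∈ range l, Z i ⁻¹' Aᶜ := by ext; simp
  have hprod : μ.real {ω | ∀ i ∈ range l, Z i ω ∉ A} = (1 - P.real A) ^ l := by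
    rw [hset, measureReal_def, hiid.measure_inter_preimage_eq_mul _ fun _ _ => hA.compl,
      ENNReal.toReal_prod]
    simp_rw [← Measure.map_apply (hZ _) hA.compl, hdist, ← measureReal_def,
      probReal_compl_eq_one_sub hA, prod_const, card_range]
  rw [hprod, neg_mul_eq_mul_neg, exp_nat_mul]
  exact pow_le_pow_left₀ (sub_nonneg.2 measureReal_le_one) (one_sub_le_exp_neg _) l

theorem ae_eventually_subset_iUnion_ball_of_summable [PseudoMetricSpace α]
    [OpensMeasurableSpace α] (hZ : ∀ i, Measurable (Z i)) (hiid : iIndepFun Z μ)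
    (hdist : ∀ i, μ.map (Z i) = P) {Q : Set α} {F : ℕ → Finset α} {r s p : ℕ → ℝ}
    (hF : ∀ᶠ l in atTop, Q ⊆ ⋃ y ∈ F l, closedBall y (s l))
    (hp : ∀ᶠ l in atTop, ∀ y ∈ F l, p l ≤ P.real (ball y (r l)))
    (hsum : Summable fun l : ℕ => (F l).card * exp (-(l * p l))) :
    ∀ᵐ ω ∂μ, ∀ᶠ l in atTop, Q ⊆ ⋃ i ∈ range l, ball (Z i ω) (r l + s l) := by
  set B : ℕ → Set Ω := fun l => ⋃ y ∈ F l, {ω | ∀ i ∈ range l, Z i ω ∉ ball y (r l)}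
  have hB : ∀ᶠ l in atTop, ‖μ.real (B l)‖ ≤ (F l).card * exp (-(l * p l)) := by
    filter_upwards [hp] with l hl
    calc ‖μ.real (B l)‖ = μ.real (B l) := Real.norm_of_nonneg measureReal_nonneg
      _ ≤ ∑ y ∈ F l, μ.real {ω | ∀ i ∈ range l, Z i ω ∉ ball y (r l)} :=
        measureReal_biUnion_finset_le _ _
      _ ≤ ∑ _y ∈ F l, exp (-(l * p l)) := sum_le_sum fun y hy =>
        (measureReal_forall_notMem_le_exp hZ hiid hdist measurableSet_ball l).trans
          (by gcongr; exact hl y hy)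
      _ = (F l).card * exp (-(l * p l)) := by rw [sum_const, nsmul_eq_mul]
  have hBsum : ∑' l, μ (B l) ≠ ⊤ := by
    simpa only [measureReal_def, ENNReal.ofReal_toReal (measure_ne_top μ _)] using
      (hsum.of_norm_bounded_eventually_nat hB).tsum_ofReal_ne_top
  filter_upwards [ae_eventually_notMem hBsum] with ω hω
  filter_upwards [hω, hF] with l hωB hQF x hx
  obtain ⟨y, hy, hxy⟩ := Set.mem_iUnion₂.1 (hQF hx)
  obtain ⟨i, hi, hZi⟩ : ∃ i ∈ range l, Z i ω ∈ ball y (r l) := by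
    by_contra! h
    exact hωB (Set.mem_biUnion hy h)
  refine Set.mem_iUnion₂.2 ⟨i, hi, ?_⟩
  rw [mem_closedBall] at hxy
  rw [mem_ball] at hZi ⊢
  linarith [dist_triangle_right x (Z i ω) y]

end IID

theorem IsStandard.mul_pow_le_measureReal_ball {d : ℕ} {P : Measure (EuclideanSpace ℝ (Fin d))}
    [IsFiniteMeasure P] {Q : Set (EuclideanSpace ℝ (Fin d))} {β lam : ℝ}
    (hstd : IsStandard P Q β lam) (hβ : 0 ≤ β) {y : EuclideanSpace ℝ (Fin d)} (hy : y ∈ Q)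
    {r : ℝ} (hr : 0 < r) (hrlam : r ≤ lam) :
    β * (volume (ball (0 : EuclideanSpace ℝ (Fin d)) 1)).toReal * r ^ d ≤ P.real (ball y r) := by
  have hball : volume (ball y r) =
      ENNReal.ofReal (r ^ d) * volume (ball (0 : EuclideanSpace ℝ (Fin d)) 1) := by
    rw [Measure.addHaar_ball_of_pos volume y hr, finrank_euclideanSpace_fin]
  calc β * (volume (ball (0 : EuclideanSpace ℝ (Fin d)) 1)).toReal * r ^ d
      = (ENNReal.ofReal β * volume (ball y r)).toReal := by
        rw [hball, ENNReal.toReal_mul, ENNReal.toReal_mul, ENNReal.toReal_ofReal hβ,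
          ENNReal.toReal_ofReal (by positivity)]
        ring
    _ ≤ (P (ball y r ∩ Q)).toReal :=
        ENNReal.toReal_mono (measure_ne_top _ _) (hstd.2 y hy r hr hrlam)
    _ ≤ P.real (ball y r) := measureReal_mono Set.inter_subset_left

theorem IsStandard.ae_eventually_subset_iUnion_ball {d : ℕ} (hd : 0 < d) {Ω : Type*}
    [MeasurableSpace Ω] {μ : Measure Ω} [IsProbabilityMeasure μ]
    {Z : ℕ → Ω → EuclideanSpace ℝ (Fin d)} (hZ : ∀ i, Measurable (Z i)) (hiid : iIndepFun Z μ)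
    {P : Measure (EuclideanSpace ℝ (Fin d))} (hdist : ∀ i, μ.map (Z i) = P)
    {Q : Set (EuclideanSpace ℝ (Fin d))} (hQ : Bornology.IsBounded Q) {β lam : ℝ} (hβ : 0 < β)
    (hstd : IsStandard P Q β lam) {C : ℝ}
    (hC : (2 / (β * (volume (ball (0 : EuclideanSpace ℝ (Fin d)) 1)).toReal)) ^ ((1 : ℝ) / d)
      < C) :
    ∀ᵐ ω ∂μ, ∀ᶠ l : ℕ in atTop,
      Q ⊆ ⋃ i ∈ range l, ball (Z i ω) (C * (log l / l) ^ ((1 : ℝ) / d)) := by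
  have : IsProbabilityMeasure P := hdist 0 ▸ Measure.isProbabilityMeasure_map (hZ 0).aemeasurable
  set w := (volume (ball (0 : EuclideanSpace ℝ (Fin d)) 1)).toReal
  have hw : 0 < w := ENNReal.toReal_pos (measure_ball_pos _ _ one_pos).ne' measure_ball_lt_top.ne
  obtain ⟨C', hC', hC'C⟩ := exists_between hC
  have hC'pos : 0 < C' := (rpow_nonneg (by positivity) _).trans_lt hC'
  have ha : 2 < β * w * C' ^ d := lt_mul_pow_of_div_rpow_lt hd zero_le_two (by positivity) hC'
  obtain ⟨F, K, hF, hFcard⟩ := exists_finset_nets_card_mul_log_div_self_le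
    (E := EuclideanSpace ℝ (Fin d)) (by simpa using hd) hQ (sub_pos.2 hC'C)
  simp only [finrank_euclideanSpace_fin] at hF
  set u : ℕ → ℝ := fun l => (log l / l) ^ ((1 : ℝ) / d)
  have hr : ∀ᶠ l in atTop, 0 < C' * u l ∧ C' * u l ≤ lam :=
    (eventually_log_div_self_pos.mono fun l hl => mul_pos hC'pos (rpow_pos_of_pos hl _)).and
      (((tendsto_log_div_self_rpow_nhds_zero hd).const_mul C').eventually_le_const
        (by simpa using hstd.1))
  have hcover := ae_eventually_subset_iUnion_ball_of_summable hZ hiid hdist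
    (hF.mono fun l hl => hl.2) (r := fun l => C' * u l) (s := fun l => (C - C') * u l)
    (p := fun l => β * w * C' ^ d * (log l / l))
    ?_ (summable_mul_exp_neg_mul_log_div_self ha (fun _ => Nat.cast_nonneg _) hFcard)
  · filter_upwards [hcover] with ω hω
    filter_upwards [hω] with l hl
    simpa only [← add_mul, add_sub_cancel] using hl
  · filter_upwards [hF, hr] with l hFl hrl y hy
    calc β * w * C' ^ d * (log l / l) = β * w * (C' * u l) ^ d := by
          rw [mul_pow, log_div_self_rpow_pow hd.ne']; ring
      _ ≤ P.real (ball y (C' * u l)) :=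
          hstd.mul_pow_le_measureReal_ball hβ.le (hFl.1 hy) hrl.1 hrl.2

theorem covering_and_connected_union_general {d : ℕ} (hd : 0 < d) {Ω : Type*} [MeasurableSpace Ω]
    (μ : Measure Ω) [IsProbabilityMeasure μ]
    (Z : ℕ → Ω → EuclideanSpace ℝ (Fin d)) (hZ : ∀ i, Measurable (Z i))
    (PZ : Measure (EuclideanSpace ℝ (Fin d)))
    (hiid : ProbabilityTheory.iIndepFun Z μ)
    (hdist : ∀ i, Measure.map (Z i) μ = PZ)
    (Q : Set (EuclideanSpace ℝ (Fin d)))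
    -- Q is the support of P_Z
    (hQnull : PZ Qᶜ = 0)
    (hQcomp : IsCompact Q) (hQconn : IsConnected Q)
    (β lam : ℝ) (hβ : 0 < β) (hstd : IsStandard PZ Q β lam)
    (C : ℝ)
    (hC : (2 / (β * (volume (Metric.ball (0 : EuclideanSpace ℝ (Fin d)) 1)).toReal))
            ^ ((1:ℝ)/d) < C)
    (ε : ℕ → ℝ) (hε : ∀ l : ℕ, ε l = C * (Real.log l / l) ^ ((1:ℝ)/d)) :
    ∀ᵐ ω ∂μ, ∃ L : ℕ, ∀ l ≥ L,
      Q ⊆ (⋃ i ∈ Finset.range l, Metric.ball (Z i ω) (ε l)) ∧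
      IsConnected (⋃ i ∈ Finset.range l, Metric.ball (Z i ω) (ε l)) := by
  have hZQ : ∀ᵐ ω ∂μ, ∀ i, Z i ω ∈ Q := ae_all_iff.2 fun i =>
    ae_of_ae_map (hZ i).aemeasurable (hdist i ▸ mem_ae_iff.2 hQnull)
  filter_upwards [hZQ, hstd.ae_eventually_subset_iUnion_ball hd hZ hiid hdist hQcomp.isBounded
    hβ hC] with ω hZQω hcover
  obtain ⟨L, hL⟩ := eventually_atTop.1 hcover
  refine ⟨L, fun l hl => ?_⟩
  rw [hε]
  exact ⟨hL l hl, hQconn.biUnion_ball_of_subset (fun i _ => hZQω i) (hL l hl)⟩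

/-- Remark 1: for iid `Z₁,Z₂,…` whose distribution `P_Z` has
compact, connected support `Q` that is standard with constant `β`, if
`ε_l = C (log l / l)^{1/d}` with `C > (2/(β ω_d))^{1/d}` then a.s., for `l` large,
`Q ⊆ ⋃_{i≤l} B(Zᵢ, ε_l)` and this union is connected. -/
theorem covering_and_connected_union {d : ℕ} (hd : 0 < d) {Ω : Type*} [MeasurableSpace Ω]
    (μ : Measure Ω) [IsProbabilityMeasure μ]
    (Z : ℕ → Ω → EuclideanSpace ℝ (Fin d)) (hZ : ∀ i, Measurable (Z i))
    (PZ : Measure (EuclideanSpace ℝ (Fin d)))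
    (hiid : ProbabilityTheory.iIndepFun Z μ)
    (hdist : ∀ i, Measure.map (Z i) μ = PZ)
    (Q : Set (EuclideanSpace ℝ (Fin d)))
    -- Q is the support of P_Z
    (hQclosed : IsClosed Q) (hQnull : PZ Qᶜ = 0)
    (hQfull : ∀ x ∈ Q, ∀ r : ℝ, 0 < r → 0 < PZ (Metric.ball x r))
    (hQcomp : IsCompact Q) (hQconn : IsConnected Q)
    (β lam : ℝ) (hβ : 0 < β) (hstd : IsStandard PZ Q β lam)
    (C : ℝ)
    (hC : (2 / (β * (volume (Metric.ball (0 : EuclideanSpace ℝ (Fin d)) 1)).toReal))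
            ^ ((1:ℝ)/d) < C)
    (ε : ℕ → ℝ) (hε : ∀ l : ℕ, ε l = C * (Real.log l / l) ^ ((1:ℝ)/d)) :
    ∀ᵐ ω ∂μ, ∃ L : ℕ, ∀ l ≥ L,
      Q ⊆ (⋃ i ∈ Finset.range l, Metric.ball (Z i ω) (ε l)) ∧
      IsConnected (⋃ i ∈ Finset.range l, Metric.ball (Z i ω) (ε l)) :=
  covering_and_connected_union_general hd μ Z hZ PZ hiid hdist Q hQnull hQcomp hQconn β lam hβ hstd
    C hC ε hε
end

section
/- In the semi-supervised labeling algorithm, assume P(X ∈ η^{-1}(1/2)) = 0 and that all labels in the training sample agree with the Bayes rule (Yⁱ = g*(Xⁱ) for all training pairs). If j_bad is the first step at which the algorithm assigns a label different from the Bayes rule, then the point X_{i_{j_bad}} labeled at that step lies in B₀^{h_l} ∪ B₁^{h_l}, the region of points of one class within distance h_l of the other class. -/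
open Metric
open scoped Classical

/-- Lemma 1: suppose all already-labeled points carry their Bayes
labels.  If a point `x` (with `η(x) ≠ 1/2`) having at least one labeled
neighbor within distance `h` receives, from the majority rule over its labeled
`h`-neighbors, a label different from its Bayes label `g*(x)`, then `x` lies in
the boundary region `B₀^h ∪ B₁^h` (points of one class within distance `h` of
the other class). -/
theorem first_bad_point_in_boundary {d : ℕ}
    (η : EuclideanSpace ℝ (Fin d) → ℝ)
    (I₀ I₁ : Set (EuclideanSpace ℝ (Fin d)))
    (hI₀ : I₀ = η ⁻¹' (Set.Ico (0:ℝ) (1/2)))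
    (hI₁ : I₁ = η ⁻¹' (Set.Ioc (1/2 : ℝ) 1))
    (gstar : EuclideanSpace ℝ (Fin d) → Bool)
    (hgstar : ∀ x, gstar x = decide ((1:ℝ)/2 ≤ η x))
    (h : ℝ) (hh : 0 < h)
    -- the already-labeled points, all carrying their Bayes labels
    (D : Finset (EuclideanSpace ℝ (Fin d)))
    (x : EuclideanSpace ℝ (Fin d)) (hx : x ∈ I₀ ∪ I₁)
    -- the labeled neighbors of x within distance h
    (F : Finset (EuclideanSpace ℝ (Fin d)))
    (hF : F = D.filter (fun z => z ∈ Metric.ball x h))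
    (hFne : F.Nonempty)
    (hFloc : ∀ z ∈ F, z ∈ I₀ ∪ I₁)
    -- the majority-rule label assigned to x
    (ytilde : Bool)
    (hy : ytilde = decide (F.card ≤ 2 * (F.filter (fun z => gstar z = true)).card))
    -- x is badly classified
    (hbad : ytilde ≠ gstar x) :
    x ∈ (I₀ ∩ ⋃ s ∈ I₁, Metric.ball s h) ∪ (I₁ ∩ ⋃ s ∈ I₀, Metric.ball s h) := by

  have hball : ∀ z ∈ F, dist x z < h := by
    intro z hz
    rw [hF, Finset.mem_filter] at hz
    have := hz.2
    rw [Metric.mem_ball] at this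
    rwa [dist_comm]
  rcases hx with hx0 | hx1
  · -- x ∈ I₀, so gstar x = false, so ytilde = true
    left
    have hηx : η x < 1/2 := by
      rw [hI₀] at hx0; exact hx0.2
    have hgx : gstar x = false := by
      rw [hgstar]; exact decide_eq_false (by linarith)
    have hyt : ytilde = true := by
      cases hy' : ytilde
      · exact absurd (hy' ▸ hgx ▸ rfl) hbad
      · rfl
    have hcard : F.card ≤ 2 * (F.filter (fun z => gstar z = true)).card := by
      have h2 := hyt
      rw [hy] at h2
      exact of_decide_eq_true h2
    have hpos : 0 < (F.filter (fun z => gstar z = true)).card := by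
      have := Finset.card_pos.mpr hFne
      omega
    obtain ⟨z, hz⟩ := Finset.card_pos.mp hpos
    rw [Finset.mem_filter] at hz
    have hzF := hz.1
    have hzg : gstar z = true := hz.2
    have hηz : (1:ℝ)/2 ≤ η z := by
      have := hzg; rw [hgstar] at this; exact of_decide_eq_true this
    have hz1 : z ∈ I₁ := by
      rcases hFloc z hzF with h0 | h1
      · rw [hI₀] at h0; linarith [h0.2]
      · exact h1
    refine ⟨hx0, ?_⟩
    exact Set.mem_biUnion hz1 (Metric.mem_ball.mpr (hball z hzF))
  · -- x ∈ I₁, gstar x = true, ytilde = false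
    right
    have hηx : (1:ℝ)/2 < η x := by rw [hI₁] at hx1; exact hx1.1
    have hgx : gstar x = true := by
      rw [hgstar]; exact decide_eq_true (by linarith)
    have hyt : ytilde = false := by
      cases hy' : ytilde
      · rfl
      · exact absurd (hy' ▸ hgx ▸ rfl) hbad
    have hcard : ¬ F.card ≤ 2 * (F.filter (fun z => gstar z = true)).card := by
      have h2 := hyt
      rw [hy] at h2
      exact of_decide_eq_false h2
    push_neg at hcard
    have hne : ∃ z ∈ F, gstar z = false := by
      by_contra hc
      push_neg at hc
      have : F.filter (fun z => gstar z = true) = F := by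
        apply Finset.filter_true_of_mem
        intro z hz
        cases hg : gstar z
        · exact absurd hg (hc z hz)
        · rfl
      rw [this] at hcard
      have hpos : 0 < F.card := Finset.card_pos.mpr hFne
      omega
    obtain ⟨z, hzF, hzg⟩ := hne
    have hηz : η z < 1/2 := by
      have := hzg; rw [hgstar] at this
      have := of_decide_eq_false this
      linarith [not_le.mp this]
    have hz0 : z ∈ I₀ := by
      rcases hFloc z hzF with h0 | h1
      · exact h0
      · rw [hI₁] at h1; linarith [h1.1]
    refine ⟨hx1, ?_⟩
    exact Set.mem_biUnion hz0 (Metric.mem_ball.mpr (hball z hzF))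
end

section
/- Let I₀ and I₁ be disjoint connected sets covering the support (up to null sets) such that almost surely, for all l large enough, each I_a is covered by ∪_{X ∈ X_l ∩ I_a} B(X, h_l/2), and suppose the initial training sample contains at least one point in each I_a. Then almost surely, for l large enough, the sequential algorithm labels every point of the unlabeled sample X_l: at every step j < l with unlabeled points remaining, there is an unlabeled point within distance h_l of the already-labeled set. -/
open Metric MeasureTheory Filter

/-- Chain/connectedness step: if a connected set `Ia` is covered by balls of
radius `r/2` centered at points of `S ⊆ Ia`, each point of `S` is either in `U`
or in `Z`, `Z` meets `Ia`, and `U ∩ S` is nonempty, then some point of `U` is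
within distance `r` of `Z`. -/
lemma chain_step {E : Type*} [PseudoMetricSpace E] {Ia S U Z : Set E} {r : ℝ}
    (hr : 0 < r) (hconn : IsConnected Ia)
    (hcov : Ia ⊆ ⋃ p ∈ S, Metric.ball p (r / 2))
    (hS : S ⊆ Ia)
    (hSUZ : ∀ p ∈ S, p ∈ U ∨ p ∈ Z)
    (xa : E) (hxaZ : xa ∈ Z) (hxaI : xa ∈ Ia)
    (u : E) (huU : u ∈ U) (huS : u ∈ S) :
    ∃ v ∈ U, Metric.infDist v Z < r := by
  -- first, locate a ball covering `xa`
  obtain ⟨p, hpS, hxap⟩ : ∃ p ∈ S, xa ∈ Metric.ball p (r / 2) := by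
    have := hcov hxaI
    simpa using this
  by_cases hpU : p ∈ U
  · -- `xa ∈ Z` is close to `p ∈ U`
    refine ⟨p, hpU, lt_of_le_of_lt (Metric.infDist_le_dist_of_mem hxaZ) ?_⟩
    rw [Metric.mem_ball] at hxap
    rw [dist_comm]
    linarith
  · -- chain argument
    set A : Set E := ⋃ q ∈ S ∩ U, Metric.ball q (r / 2) with hA
    set B : Set E := ⋃ q ∈ S \ U, Metric.ball q (r / 2) with hB
    have hAopen : IsOpen A := isOpen_biUnion fun _ _ => Metric.isOpen_ball
    have hBopen : IsOpen B := isOpen_biUnion fun _ _ => Metric.isOpen_ball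
    have hsub : Ia ⊆ A ∪ B := by
      intro y hy
      obtain ⟨q, hqS, hyq⟩ : ∃ q ∈ S, y ∈ Metric.ball q (r / 2) := by
        simpa using hcov hy
      by_cases hqU : q ∈ U
      · exact Or.inl (Set.mem_biUnion ⟨hqS, hqU⟩ hyq)
      · exact Or.inr (Set.mem_biUnion ⟨hqS, hqU⟩ hyq)
    have hAI : (Ia ∩ A).Nonempty :=
      ⟨u, hS huS, Set.mem_biUnion ⟨huS, huU⟩ (Metric.mem_ball_self (by linarith))⟩
    have hBI : (Ia ∩ B).Nonempty :=
      ⟨p, hS hpS, Set.mem_biUnion ⟨hpS, hpU⟩ (Metric.mem_ball_self (by linarith))⟩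
    obtain ⟨y, _, hyA, hyB⟩ :=
      hconn.isPreconnected A B hAopen hBopen hsub hAI hBI
    obtain ⟨u', hu'SU, hyu'⟩ : ∃ q ∈ S ∩ U, y ∈ Metric.ball q (r / 2) := by
      simpa [hA] using hyA
    obtain ⟨z, hzSU, hyz⟩ : ∃ q ∈ S \ U, y ∈ Metric.ball q (r / 2) := by
      simpa [hB] using hyB
    have hzZ : z ∈ Z := (hSUZ z hzSU.1).resolve_left hzSU.2
    refine ⟨u', hu'SU.2, lt_of_le_of_lt (Metric.infDist_le_dist_of_mem hzZ) ?_⟩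
    rw [Metric.mem_ball] at hyu' hyz
    calc dist u' z ≤ dist u' y + dist y z := dist_triangle _ _ _
      _ < r := by rw [dist_comm u' y]; linarith

/-- Proposition 2: if `I₀, I₁` are connected, carry all the mass,
a.s. for large `l` each `I_a` is covered by balls `B(X, h_l/2)` centered at
sample points in `I_a`, and the training set contains a point of each `I_a`,
then a.s. for large `l` the sequential algorithm never gets stuck: whenever the
labeled set `Z` contains the training points and some sample points remain
unlabeled, one of the unlabeled points is within distance `h_l` of `Z`.
Consequently the algorithm labels every point of the sample. -/
theorem algorithm_classifies_everything {d : ℕ} {Ω : Type*} [MeasurableSpace Ω]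
    (μ : Measure Ω) [IsProbabilityMeasure μ]
    (X : ℕ → Ω → EuclideanSpace ℝ (Fin d))
    (I₀ I₁ : Set (EuclideanSpace ℝ (Fin d)))
    -- H1: the two class regions carry all the mass
    (hmass : ∀ i, ∀ᵐ ω ∂μ, X i ω ∈ I₀ ∪ I₁)
    -- H2 i): connectedness
    (hconn₀ : IsConnected I₀) (hconn₁ : IsConnected I₁)
    (h : ℕ → ℝ) (hpos : ∀ l, 0 < h l)
    -- H3: a.s., for l large, each class region is covered by balls of radius
    -- h_l/2 centered at the sample points falling in it
    (hcover : ∀ᵐ ω ∂μ, ∃ L : ℕ, ∀ l ≥ L, ∀ a ∈ ({I₀, I₁} : Set (Set (EuclideanSpace ℝ (Fin d)))),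
      a ⊆ ⋃ i ∈ Finset.range l, ⋃ (_ : X i ω ∈ a), Metric.ball (X i ω) (h l / 2))
    -- H4: the training sample contains a point in each class region
    (T : Set (EuclideanSpace ℝ (Fin d))) (x₀ x₁ : EuclideanSpace ℝ (Fin d))
    (hx₀ : x₀ ∈ T ∩ I₀) (hx₁ : x₁ ∈ T ∩ I₁) :
    ∀ᵐ ω ∂μ, ∃ L : ℕ, ∀ l ≥ L,
      ∀ U : Set (EuclideanSpace ℝ (Fin d)),
        U ⊆ {x | ∃ i < l, X i ω = x} → U.Nonempty →
        ∃ u ∈ U, Metric.infDist u (T ∪ ({x | ∃ i < l, X i ω = x} \ U)) < h l := by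
  have hmass' : ∀ᵐ ω ∂μ, ∀ i, X i ω ∈ I₀ ∪ I₁ := ae_all_iff.mpr hmass
  filter_upwards [hmass', hcover] with ω hmem hcov
  obtain ⟨L, hL⟩ := hcov
  refine ⟨L, fun l hl U hUsub ⟨u, huU⟩ => ?_⟩
  obtain ⟨i, hil, hXi⟩ := hUsub huU
  -- determine the region of `u`
  have hu2 := hmem i
  rw [hXi] at hu2
  have key : ∀ Ia ∈ ({I₀, I₁} : Set (Set (EuclideanSpace ℝ (Fin d)))),
      IsConnected Ia → u ∈ Ia → ∀ xa ∈ T ∩ Ia,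
      ∃ v ∈ U, Metric.infDist v (T ∪ ({x | ∃ i < l, X i ω = x} \ U)) < h l := by
    intro Ia hIa hconn huIa xa hxa
    refine chain_step (hpos l) hconn (S := {p | (∃ i < l, X i ω = p) ∧ p ∈ Ia})
      (Z := T ∪ ({x | ∃ i < l, X i ω = x} \ U)) ?_ (fun p hp => hp.2) ?_
      xa (Or.inl hxa.1) hxa.2 u huU ⟨⟨i, hil, hXi⟩, huIa⟩
    · intro y hy
      have := hL l hl Ia hIa hy
      simp only [Set.mem_iUnion, Finset.mem_range] at this
      obtain ⟨j, hjl, hjI, hyj⟩ := this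
      exact Set.mem_biUnion ⟨⟨j, hjl, rfl⟩, hjI⟩ hyj
    · intro p hp
      by_cases hpU : p ∈ U
      · exact Or.inl hpU
      · exact Or.inr (Or.inr ⟨hp.1, hpU⟩)
  rcases hu2 with h0 | h1
  · exact key I₀ (Set.mem_insert _ _) hconn₀ h0 x₀ hx₀
  · exact key I₁ (Set.mem_insert_of_mem _ rfl) hconn₁ h1 x₁ hx₁
end

section
/- If reach(S) > 0 for a closed set S ⊆ ℝ^d with S ⊖ B(0,ε) having reach greater than ε, then the map f defined by f(x) = x on S ⊖ B(0,ε) and f(x) = π_{∂(S ⊖ B(0,ε))}(x) (the metric projection onto the boundary of the eroded set) for x ∈ S \ (S ⊖ B(0,ε)) is continuous on S, and hence if S is connected then f(S) = S ⊖ B(0,ε) is connected. -/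
open Metric Classical
open scoped Classical
open Filter

/-- Points with a unique metric projection onto `S`. -/
def Unp {d : ℕ} (S : Set (EuclideanSpace ℝ (Fin d))) : Set (EuclideanSpace ℝ (Fin d)) :=
  {x | ∃! y, y ∈ S ∧ dist x y = Metric.infDist x S}

noncomputable def reachAt {d : ℕ} (S : Set (EuclideanSpace ℝ (Fin d)))
    (x : EuclideanSpace ℝ (Fin d)) : ℝ :=
  sSup {r : ℝ | 0 < r ∧ Metric.ball x r ⊆ Unp S}

/-- Federer's reach. -/
noncomputable def reach {d : ℕ} (S : Set (EuclideanSpace ℝ (Fin d))) : ℝ :=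
  sInf (reachAt S '' S)

/-- Erosion `A ⊖ B(0,ε)`. -/
def erode {d : ℕ} (A : Set (EuclideanSpace ℝ (Fin d))) (ε : ℝ) :
    Set (EuclideanSpace ℝ (Fin d)) :=
  {x | Metric.ball x ε ⊆ A}

lemma proj_tendsto {d : ℕ} (A : Set (EuclideanSpace ℝ (Fin d))) (hA : IsClosed A)
    (T : Set (EuclideanSpace ℝ (Fin d))) (π : EuclideanSpace ℝ (Fin d) → EuclideanSpace ℝ (Fin d))
    (hπ : ∀ y ∈ T, π y ∈ A ∧ dist y (π y) = infDist y A)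
    (x p : EuclideanSpace ℝ (Fin d)) (hp : p ∈ A)
    (huniq : ∀ q ∈ A, dist x q = infDist x A → q = p) :
    Tendsto π (nhdsWithin x T) (nhds p) := by
  rw [Filter.tendsto_iff_seq_tendsto]
  intro u hu
  have huT : ∀ᶠ n in atTop, u n ∈ T := hu self_mem_nhdsWithin
  have hux : Tendsto u atTop (nhds x) := hu.mono_right nhdsWithin_le_nhds
  by_contra hcon
  rw [Metric.tendsto_atTop] at hcon
  push_neg at hcon
  obtain ⟨ε₀, hε₀, hfreq⟩ := hcon
  have hfreq' : ∃ᶠ n in atTop, ε₀ ≤ dist (π (u n)) p := by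
    rw [Filter.frequently_atTop]
    intro N; obtain ⟨n, hn, hn2⟩ := hfreq N; exact ⟨n, hn, hn2⟩
  obtain ⟨φ, hφmono, hφ⟩ := Filter.extraction_of_frequently_atTop (hfreq'.and_eventually huT)
  set v : ℕ → EuclideanSpace ℝ (Fin d) := fun n => u (φ n) with hv
  have hvx : Tendsto v atTop (nhds x) := hux.comp hφmono.tendsto_atTop
  have hvT : ∀ n, v n ∈ T := fun n => (hφ n).2
  have hwd : ∀ n, ε₀ ≤ dist (π (v n)) p := fun n => (hφ n).1
  obtain ⟨C, hC⟩ := (Metric.isBounded_range_of_tendsto v hvx).subset_closedBall x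
  have hwball : ∀ n, π (v n) ∈ closedBall x (2 * C + dist x p) ∩ A := by
    intro n
    have h1 : dist (v n) x ≤ C := hC ⟨n, rfl⟩
    have h2 : dist (v n) (π (v n)) = infDist (v n) A := (hπ _ (hvT n)).2
    have h3 : infDist (v n) A ≤ dist (v n) p := infDist_le_dist_of_mem hp
    refine ⟨?_, (hπ _ (hvT n)).1⟩
    rw [mem_closedBall, dist_comm]
    calc dist x (π (v n)) ≤ dist x (v n) + dist (v n) (π (v n)) := dist_triangle _ _ _
      _ ≤ C + dist (v n) p := by
          rw [dist_comm x]
          exact add_le_add h1 (h2 ▸ h3)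
      _ ≤ C + (dist (v n) x + dist x p) := by linarith [dist_triangle (v n) x p]
      _ ≤ 2 * C + dist x p := by linarith
  have hcomp : IsCompact (closedBall x (2 * C + dist x p) ∩ A) :=
    (isCompact_closedBall x _).inter_right hA
  obtain ⟨q, hq, ψ, hψmono, hψ⟩ := hcomp.tendsto_subseq hwball
  have hqA : q ∈ A := hq.2
  have hvψ : Tendsto (fun n => v (ψ n)) atTop (nhds x) := hvx.comp hψmono.tendsto_atTop
  have hd1 : Tendsto (fun n => dist (v (ψ n)) (π (v (ψ n)))) atTop (nhds (dist x q)) :=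
    hvψ.dist hψ
  have hd2 : Tendsto (fun n => infDist (v (ψ n)) A) atTop (nhds (infDist x A)) :=
    ((continuous_infDist_pt A).tendsto x).comp hvψ
  have heq : dist x q = infDist x A := by
    refine tendsto_nhds_unique hd1 ?_
    convert hd2 using 2 with n
    exact (hπ _ (hvT (ψ n))).2
  have hqp : q = p := huniq q hqA heq
  have : Tendsto (fun n => dist (π (v (ψ n))) p) atTop (nhds (dist q p)) :=
    hψ.dist tendsto_const_nhds
  have hle : ε₀ ≤ dist q p := le_of_tendsto_of_tendsto' tendsto_const_nhds this (fun n => hwd (ψ n))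
  rw [hqp, dist_self] at hle
  linarith

/-- proof of Lemma 6: if `S` is closed with `reach S > 0` and
the eroded set `S ⊖ B(0,ε)` has reach greater than `ε`, then the map equal to
the identity on `S ⊖ B(0,ε)` and to the metric projection onto
`∂(S ⊖ B(0,ε))` on `S \ (S ⊖ B(0,ε))` is continuous on `S`, its image is
`S ⊖ B(0,ε)`, and hence if `S` is connected then `S ⊖ B(0,ε)` is connected. -/
theorem projection_map_continuous {d : ℕ} (S : Set (EuclideanSpace ℝ (Fin d)))
    (hSclosed : IsClosed S) (hreachS : 0 < reach S)
    (ε : ℝ) (hε : 0 < ε)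
    (herode : ε < reach (erode S ε))
    (π : EuclideanSpace ℝ (Fin d) → EuclideanSpace ℝ (Fin d))
    -- π is the (single-valued) metric projection onto ∂(S ⊖ B(0,ε))
    (hπ : ∀ x ∈ S \ erode S ε,
      π x ∈ frontier (erode S ε) ∧
      dist x (π x) = Metric.infDist x (frontier (erode S ε)) ∧
      (∀ y ∈ frontier (erode S ε),
        dist x y = Metric.infDist x (frontier (erode S ε)) → y = π x))
    (f : EuclideanSpace ℝ (Fin d) → EuclideanSpace ℝ (Fin d))
    (hf : ∀ x, f x = if x ∈ erode S ε then x else π x) :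
    ContinuousOn f S ∧ f '' S = erode S ε ∧
      (IsConnected S → IsConnected (erode S ε)) := by
  -- basic facts
  have herode_open_compl : IsOpen (erode S ε)ᶜ := by
    rw [isOpen_iff_mem_nhds]
    intro x hx
    simp only [Set.mem_compl_iff, erode, Set.mem_setOf_eq] at hx
    rw [Set.not_subset] at hx
    obtain ⟨y, hy1, hy2⟩ := hx
    rw [Metric.mem_nhds_iff]
    refine ⟨ε - dist y x, by simpa using hy1, ?_⟩
    intro z hz
    simp only [Set.mem_compl_iff, erode, Set.mem_setOf_eq, Set.not_subset]
    refine ⟨y, ?_, hy2⟩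
    rw [mem_ball] at hz ⊢
    calc dist y z ≤ dist y x + dist x z := dist_triangle _ _ _
      _ < dist y x + (ε - dist y x) := by rw [dist_comm x z]; linarith
      _ = ε := by ring
  have herode_closed : IsClosed (erode S ε) := by
    rw [← isOpen_compl_iff]; exact herode_open_compl
  have herode_sub : erode S ε ⊆ S := fun x hx => hx (mem_ball_self hε)
  have hfrontier : frontier (erode S ε) = erode S ε \ interior (erode S ε) := by
    rw [frontier, herode_closed.closure_eq]
  set A := frontier (erode S ε) with hA
  have hAclosed : IsClosed A := isClosed_frontier
  have hASub : A ⊆ erode S ε := fun x hx => by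
    rw [hfrontier] at hx; exact hx.1
  -- continuity
  have hcont : ContinuousOn f S := by
    intro x hxS
    by_cases hx : x ∈ erode S ε
    · by_cases hxi : x ∈ interior (erode S ε)
      · -- f = id near x
        have : ContinuousWithinAt id S x := continuousWithinAt_id
        refine this.congr_of_eventuallyEq ?_ (by rw [hf]; simp [hx])
        filter_upwards [nhdsWithin_le_nhds (mem_interior_iff_mem_nhds.mp hxi)] with y hy
        rw [hf]; simp [hy]
      · -- x ∈ frontier
        have hxA : x ∈ A := by rw [hfrontier]; exact ⟨hx, hxi⟩
        rw [Metric.continuousWithinAt_iff]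
        intro δ hδ
        refine ⟨δ / 2, by linarith, ?_⟩
        intro y hyS hyx
        have hfx : f x = x := by rw [hf]; simp [hx]
        rw [hfx]
        by_cases hy : y ∈ erode S ε
        · rw [hf]; simp only [hy, if_true]; linarith
        · have hfy : f y = π y := by rw [hf]; simp [hy]
          rw [hfy]
          obtain ⟨h1, h2, h3⟩ := hπ y ⟨hyS, hy⟩
          have h4 : infDist y A ≤ dist y x := infDist_le_dist_of_mem hxA
          calc dist (π y) x ≤ dist (π y) y + dist y x := dist_triangle _ _ _
            _ = infDist y A + dist y x := by rw [dist_comm, h2]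
            _ ≤ dist y x + dist y x := by linarith
            _ < δ := by linarith
    · -- x ∈ S \ erode S ε
      obtain ⟨hπx1, hπx2, hπx3⟩ := hπ x ⟨hxS, hx⟩
      have hT : Tendsto π (nhdsWithin x (S \ erode S ε)) (nhds (π x)) := by
        refine proj_tendsto A hAclosed (S \ erode S ε) π ?_ x (π x) hπx1 ?_
        · intro y hy; exact ⟨(hπ y hy).1, (hπ y hy).2.1⟩
        · intro q hq hqd; exact hπx3 q hq hqd
      have hfx : f x = π x := by rw [hf]; simp [hx]
      unfold ContinuousWithinAt
      rw [hfx]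
      have hnhds : nhdsWithin x S = nhdsWithin x (S ∩ (erode S ε)ᶜ) :=
        nhdsWithin_restrict' S (herode_open_compl.mem_nhds hx)
      rw [hnhds]
      refine hT.congr' ?_ |>.mono_left ?_
      · filter_upwards [self_mem_nhdsWithin] with y hy
        rw [hf]; simp [hy.2]
      · exact le_of_eq (by rw [Set.diff_eq])
  -- image
  have himg : f '' S = erode S ε := by
    apply Set.Subset.antisymm
    · rintro _ ⟨x, hxS, rfl⟩
      by_cases hx : x ∈ erode S ε
      · rw [hf]; simp [hx]
      · rw [hf]; simp only [hx, if_false]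
        exact hASub (hπ x ⟨hxS, hx⟩).1
    · intro x hx
      exact ⟨x, herode_sub hx, by rw [hf]; simp [hx]⟩
  refine ⟨hcont, himg, ?_⟩
  intro hS
  have := hS.image f hcont
  rwa [himg] at this
end
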